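/- Let A_m ∈ ℝ^{n×n} have spectral radius strictly less than 1, let B ∈ ℝ^{n×m}, and let (x_k) in ℝ^n satisfy x_{k+1} = A_m x_k + B r_k + B ε_{k+1} with ‖r_k‖ ≤ r_max for all k. Suppose there exists a sequence (δ_k) of nonnegative reals with δ_k → 0 such that ‖ε_{k+1}‖ ≤ δ_k ‖x_k‖ for all k. Then the sequence (x_k) is bounded: sup_k ‖x_k‖ < ∞. -/

import Mathlib

/-!
By Gelfand's formula, spectral radius `< 1` gives `‖Aᴺ‖ ≤ ρᴺ` for some `ρ < 1` and `N ≥ 1`. The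
weighted sum `ν v = ∑_{j<N} ‖Aʲ v‖ / ρʲ` is then equivalent to the norm and `A` contracts it by
`ρ`, so the recursion gives `ν xₖ₊₁ ≤ (ρ + M |δₖ|) ν xₖ + M b`. Once `δₖ` is small this is a
contraction with bounded forcing, hence `ν xₖ`, and with it `‖xₖ‖`, stays bounded. The real
system is run in `ℂⁿ`, where the spectral hypothesis lives.
-/

open Filter Topology
open scoped NNReal ENNReal Matrix Matrix.Norms.L2Operator

theorem spectralRadius_lt_of_forall_nnnorm_lt {𝕜 A : Type*} [NormedField 𝕜] [ProperSpace 𝕜]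
    [NormedRing A] [NormedAlgebra 𝕜 A] [CompleteSpace A] {a : A} {r : ℝ≥0} (hr : 0 < r)
    (h : ∀ k ∈ spectrum 𝕜 a, ‖k‖₊ < r) : spectralRadius 𝕜 a < r := by
  rcases (spectrum 𝕜 a).eq_empty_or_nonempty with hempty | hne
  · simpa [spectralRadius, hempty] using hr
  · exact spectrum.spectralRadius_lt_of_forall_lt_of_nonempty hne h

theorem exists_norm_pow_le_pow_of_spectralRadius_lt_one {A : Type*} [NormedRing A]
    [NormedAlgebra ℂ A] [CompleteSpace A] {a : A} (ha : spectralRadius ℂ a < 1) :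
    ∃ ρ : ℝ, 0 < ρ ∧ ρ < 1 ∧ ∃ N, 0 < N ∧ ‖a ^ N‖ ≤ ρ ^ N := by
  obtain ⟨ρ, hρa, hρ1⟩ := ENNReal.lt_iff_exists_nnreal_btwn.mp ha
  obtain ⟨N, hN⟩ := ((spectrum.pow_nnnorm_pow_one_div_tendsto_nhds_spectralRadius a).eventually
    (gt_mem_nhds hρa)).exists_forall_of_atTop
  specialize hN (N + 1) N.le_succ
  refine ⟨ρ, by exact_mod_cast (pos_of_gt hρa : (0 : ℝ≥0∞) < ρ), by exact_mod_cast hρ1,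
    N + 1, N.succ_pos, ?_⟩
  rw [one_div, ENNReal.rpow_inv_lt_iff (by positivity), ENNReal.rpow_natCast] at hN
  exact_mod_cast hN.le

namespace ContinuousLinearMap

variable {𝕜 E : Type*} [NontriviallyNormedField 𝕜] [SeminormedAddCommGroup E] [NormedSpace 𝕜 E]
  (T : E →L[𝕜] E) (ρ : ℝ) (N : ℕ)

noncomputable def lyapunovNorm (v : E) : ℝ := ∑ j ∈ Finset.range N, ‖(T ^ j) v‖ / ρ ^ j

variable {T ρ N}

theorem lyapunovNorm_nonneg (hρ : 0 ≤ ρ) (v : E) : 0 ≤ T.lyapunovNorm ρ N v :=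
  Finset.sum_nonneg fun _ _ => by positivity

theorem norm_le_lyapunovNorm (hN : 0 < N) (hρ : 0 ≤ ρ) (v : E) : ‖v‖ ≤ T.lyapunovNorm ρ N v := by
  have h := Finset.single_le_sum (f := fun j => ‖(T ^ j) v‖ / ρ ^ j)
    (fun _ _ => by positivity) (Finset.mem_range.mpr hN)
  simp only [pow_zero, div_one, one_apply_eq_self] at h
  exact h

theorem lyapunovNorm_le (hρ : 0 ≤ ρ) (v : E) :
    T.lyapunovNorm ρ N v ≤ (∑ j ∈ Finset.range N, ‖T ^ j‖ / ρ ^ j) * ‖v‖ := by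
  rw [lyapunovNorm, Finset.sum_mul]
  refine Finset.sum_le_sum fun j _ => ?_
  rw [div_mul_eq_mul_div]
  gcongr
  exact (T ^ j).le_opNorm v

theorem lyapunovNorm_add_le (hρ : 0 ≤ ρ) (u v : E) :
    T.lyapunovNorm ρ N (u + v) ≤ T.lyapunovNorm ρ N u + T.lyapunovNorm ρ N v := by
  simp only [lyapunovNorm, ← Finset.sum_add_distrib, ← add_div, map_add]
  exact Finset.sum_le_sum fun j _ => by gcongr; exact norm_add_le _ _

theorem lyapunovNorm_apply_le (hρ : 0 < ρ) (hT : ‖T ^ N‖ ≤ ρ ^ N) (v : E) :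
    T.lyapunovNorm ρ N (T v) ≤ ρ * T.lyapunovNorm ρ N v := by
  set f : ℕ → ℝ := fun j => ‖(T ^ j) v‖ / ρ ^ j
  have hshift : T.lyapunovNorm ρ N (T v) = ρ * ∑ j ∈ Finset.range N, f (j + 1) := by
    rw [lyapunovNorm, Finset.mul_sum]
    refine Finset.sum_congr rfl fun j _ => ?_
    simp only [f, pow_succ]
    field_simp
    rfl
  have htelescope : ∑ j ∈ Finset.range N, f (j + 1) + f 0
      = T.lyapunovNorm ρ N v + f N := by
    rw [← Finset.sum_range_succ', Finset.sum_range_succ]; rfl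
  have hfN : f N ≤ f 0 := by
    simp only [f, pow_zero, div_one, one_apply_eq_self]
    rw [div_le_iff₀ (by positivity), mul_comm]
    exact ((T ^ N).le_opNorm v).trans (by gcongr)
  rw [hshift]
  gcongr
  linarith

end ContinuousLinearMap

theorem isBoundedUnder_le_of_eventually_le_mul_add {a : ℕ → ℝ} {σ c : ℝ} (hσ0 : 0 ≤ σ)
    (hσ1 : σ < 1) (h : ∀ᶠ k in atTop, a (k + 1) ≤ σ * a k + c) :
    IsBoundedUnder (· ≤ ·) atTop a := by
  obtain ⟨K, hK⟩ := h.exists_forall_of_atTop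
  refine isBoundedUnder_of_eventually_le (a := max (a K) (c / (1 - σ))) ?_
  filter_upwards [eventually_ge_atTop K] with k hk
  induction k, hk using Nat.le_induction with
  | base => exact le_max_left _ _
  | succ k hk ih =>
    have hc : c ≤ (1 - σ) * max (a K) (c / (1 - σ)) := by
      rw [← div_le_iff₀' (by linarith)]
      exact le_max_right _ _
    linarith [hK k hk, mul_le_mul_of_nonneg_left ih hσ0]

open ContinuousLinearMap in
theorem exists_norm_le_of_perturbed_iteration {𝕜 E : Type*} [NontriviallyNormedField 𝕜]
    [SeminormedAddCommGroup E] [NormedSpace 𝕜 E] {T : E →L[𝕜] E} {ρ : ℝ} {N : ℕ}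
    (hρ0 : 0 < ρ) (hρ1 : ρ < 1) (hN : 0 < N) (hT : ‖T ^ N‖ ≤ ρ ^ N)
    {x u w : ℕ → E} {b : ℝ} {δ : ℕ → ℝ} (hu : ∀ k, ‖u k‖ ≤ b)
    (hδ : Tendsto δ atTop (𝓝 0)) (hw : ∀ k, ‖w k‖ ≤ δ k * ‖x k‖)
    (hx : ∀ k, x (k + 1) = T (x k) + u k + w k) :
    ∃ C, ∀ k, ‖x k‖ ≤ C := by
  set ν := T.lyapunovNorm ρ N
  set M := ∑ j ∈ Finset.range N, ‖T ^ j‖ / ρ ^ j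
  have hM : 0 ≤ M := Finset.sum_nonneg fun _ _ => by positivity
  have hstep : ∀ k, ν (x (k + 1)) ≤ (ρ + M * |δ k|) * ν (x k) + M * b := by
    intro k
    have hwν : ‖w k‖ ≤ |δ k| * ν (x k) :=
      (hw k).trans <| (mul_le_mul_of_nonneg_right (le_abs_self _) (norm_nonneg _)).trans <|
        mul_le_mul_of_nonneg_left (norm_le_lyapunovNorm hN hρ0.le _) (abs_nonneg _)
    calc ν (x (k + 1)) ≤ ν (T (x k)) + ν (u k) + ν (w k) := by
          rw [hx k]
          linarith [lyapunovNorm_add_le (T := T) (N := N) hρ0.le (T (x k) + u k) (w k),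
            lyapunovNorm_add_le (T := T) (N := N) hρ0.le (T (x k)) (u k)]
      _ ≤ ρ * ν (x k) + M * b + M * (|δ k| * ν (x k)) := by
          gcongr
          · exact lyapunovNorm_apply_le hρ0 hT _
          · exact (lyapunovNorm_le hρ0.le _).trans (mul_le_mul_of_nonneg_left (hu k) hM)
          · exact (lyapunovNorm_le hρ0.le _).trans (mul_le_mul_of_nonneg_left hwν hM)
      _ = (ρ + M * |δ k|) * ν (x k) + M * b := by ring
  have hsmall : ∀ᶠ k in atTop, ρ + M * |δ k| ≤ (1 + ρ) / 2 := by
    have hlim : Tendsto (fun k => ρ + M * |δ k|) atTop (𝓝 ρ) := by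
      have h := (tendsto_const_nhds (x := ρ)).add (hδ.abs.const_mul M)
      rwa [abs_zero, mul_zero, add_zero] at h
    exact hlim.eventually (ge_mem_nhds (by linarith))
  have hbdd : IsBoundedUnder (· ≤ ·) atTop (fun k => ν (x k)) := by
    refine isBoundedUnder_le_of_eventually_le_mul_add (σ := (1 + ρ) / 2) (c := M * b)
      (by linarith) (by linarith) ?_
    filter_upwards [hsmall] with k hk
    exact (hstep k).trans (by gcongr; exact lyapunovNorm_nonneg hρ0.le _)
  obtain ⟨C, hC⟩ := hbdd.bddAbove_range
  exact ⟨C, fun k => (norm_le_lyapunovNorm hN hρ0.le _).trans (hC ⟨k, rfl⟩)⟩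

section Complexify

variable {ι κ : Type*} [Fintype ι]

noncomputable def toComplexEuclidean (v : ι → ℝ) : EuclideanSpace ℂ ι :=
  WithLp.toLp 2 fun i => (v i : ℂ)

theorem norm_toComplexEuclidean (v : ι → ℝ) :
    ‖toComplexEuclidean v‖ = √(∑ i, v i ^ 2) := by
  simp [toComplexEuclidean, EuclideanSpace.norm_eq]

omit [Fintype ι] in
theorem toComplexEuclidean_add (u v : ι → ℝ) :
    toComplexEuclidean (u + v) = toComplexEuclidean u + toComplexEuclidean v := by
  ext i
  simp [toComplexEuclidean]

theorem toComplexEuclidean_mulVec (M : Matrix κ ι ℝ) (v : ι → ℝ) :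
    toComplexEuclidean (M *ᵥ v) =
      WithLp.toLp 2 (M.map Complex.ofReal *ᵥ WithLp.ofLp (toComplexEuclidean v)) := by
  ext i
  exact Complex.ofRealHom.map_mulVec M v i

theorem toEuclideanCLM_toComplexEuclidean [DecidableEq ι] (M : Matrix ι ι ℝ) (v : ι → ℝ) :
    Matrix.toEuclideanCLM (𝕜 := ℂ) (M.map Complex.ofReal) (toComplexEuclidean v) =
      toComplexEuclidean (M *ᵥ v) :=
  (toComplexEuclidean_mulVec M v).symm

theorem norm_toComplexEuclidean_mulVec_le [DecidableEq ι] [Fintype κ] (M : Matrix κ ι ℝ)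
    (v : ι → ℝ) :
    ‖toComplexEuclidean (M *ᵥ v)‖ ≤ ‖M.map Complex.ofReal‖ * ‖toComplexEuclidean v‖ := by
  rw [toComplexEuclidean_mulVec]
  exact Matrix.l2_opNorm_mulVec _ _

end Complexify

theorem schur_stable_relative_perturbation_bounded_general {n m : ℕ}
    (Am : Matrix (Fin n) (Fin n) ℝ) (B : Matrix (Fin n) (Fin m) ℝ)
    (hSchur : ∀ z ∈ spectrum ℂ (Am.map Complex.ofReal), ‖z‖ < 1)
    (x : ℕ → Fin n → ℝ) (r ε : ℕ → Fin m → ℝ) (rmax : ℝ)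
    (hr : ∀ k, Real.sqrt (∑ i, r k i ^ 2) ≤ rmax)
    (hrec : ∀ k, x (k + 1)
      = Am.mulVec (x k) + B.mulVec (r k) + B.mulVec (ε (k + 1)))
    (δ : ℕ → ℝ)
    (hδlim : Filter.Tendsto δ Filter.atTop (nhds 0))
    (hεx : ∀ k, Real.sqrt (∑ i, ε (k + 1) i ^ 2)
      ≤ δ k * Real.sqrt (∑ i, x k i ^ 2)) :
    ∃ C : ℝ, ∀ k, Real.sqrt (∑ i, x k i ^ 2) ≤ C := by
  set T := Matrix.toEuclideanCLM (𝕜 := ℂ) (Am.map Complex.ofReal)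
  have hT : spectralRadius ℂ T < 1 := by
    refine spectralRadius_lt_of_forall_nnnorm_lt one_pos fun z hz => ?_
    rw [AlgEquiv.spectrum_eq] at hz
    exact_mod_cast hSchur z hz
  obtain ⟨ρ, hρ0, hρ1, N, hN, hTN⟩ := exists_norm_pow_le_pow_of_spectralRadius_lt_one hT
  set cB := ‖B.map Complex.ofReal‖
  obtain ⟨C, hC⟩ := exists_norm_le_of_perturbed_iteration hρ0 hρ1 hN hTN
    (x := fun k => toComplexEuclidean (x k)) (u := fun k => toComplexEuclidean (B *ᵥ r k))
    (w := fun k => toComplexEuclidean (B *ᵥ ε (k + 1))) (b := cB * rmax) (δ := fun k => cB * δ k)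
    (fun k => (norm_toComplexEuclidean_mulVec_le B _).trans <| by
      rw [norm_toComplexEuclidean]; exact mul_le_mul_of_nonneg_left (hr k) (norm_nonneg _))
    (by simpa using hδlim.const_mul cB)
    (fun k => (norm_toComplexEuclidean_mulVec_le B _).trans <| by
      rw [norm_toComplexEuclidean, norm_toComplexEuclidean, mul_assoc]
      exact mul_le_mul_of_nonneg_left (hεx k) (norm_nonneg _))
    (fun k => by
      simp only [hrec k, toComplexEuclidean_add, toEuclideanCLM_toComplexEuclidean, T])
  exact ⟨C, fun k => norm_toComplexEuclidean (x k) ▸ hC k⟩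

/-- a Schur-stable linear system with bounded input and a
    perturbation that is eventually negligible relative to the state has
    bounded state. -/
theorem schur_stable_relative_perturbation_bounded {n m : ℕ}
    (Am : Matrix (Fin n) (Fin n) ℝ) (B : Matrix (Fin n) (Fin m) ℝ)
    (hSchur : ∀ z ∈ spectrum ℂ (Am.map Complex.ofReal), ‖z‖ < 1)
    (x : ℕ → Fin n → ℝ) (r ε : ℕ → Fin m → ℝ) (rmax : ℝ)
    (hr : ∀ k, Real.sqrt (∑ i, r k i ^ 2) ≤ rmax)
    (hrec : ∀ k, x (k + 1)
      = Am.mulVec (x k) + B.mulVec (r k) + B.mulVec (ε (k + 1)))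
    (δ : ℕ → ℝ) (hδ0 : ∀ k, 0 ≤ δ k)
    (hδlim : Filter.Tendsto δ Filter.atTop (nhds 0))
    (hεx : ∀ k, Real.sqrt (∑ i, ε (k + 1) i ^ 2)
      ≤ δ k * Real.sqrt (∑ i, x k i ^ 2)) :
    ∃ C : ℝ, ∀ k, Real.sqrt (∑ i, x k i ^ 2) ≤ C :=
  schur_stable_relative_perturbation_bounded_general Am B hSchur x r ε rmax hr hrec δ hδlim hεx
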